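/- arXiv:2304.07945 — 2 statements merged into one kernel-verified Lean document; each statement's English description precedes it below -/
import Mathlib

section
/- The function f(x,y) = log₂(1 + 1/(xy)) is jointly convex on the domain x > 0, y > 0. -/
open Real Set

private lemma g_hasDerivAt (t : ℝ) :
    HasDerivAt (fun t => Real.log (1 + Real.exp (-t))) (-(1 / (Real.exp t + 1))) t := by
  have h1 : HasDerivAt (fun t : ℝ => 1 + Real.exp (-t)) (Real.exp (-t) * (-1)) t := by
    exact ((hasDerivAt_neg t).exp).const_add 1
  have hpos : (1 : ℝ) + Real.exp (-t) ≠ 0 := by positivity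
  have := h1.log hpos
  convert this using 1
  rw [Real.exp_neg]
  have he := Real.exp_ne_zero t
  field_simp

private lemma g_convex :
    ConvexOn ℝ univ (fun t => Real.log (1 + Real.exp (-t))) := by
  have hderiv : deriv (fun t => Real.log (1 + Real.exp (-t)))
      = fun t => -(1 / (Real.exp t + 1)) := funext fun t => (g_hasDerivAt t).deriv
  refine Monotone.convexOn_univ_of_deriv (fun t => (g_hasDerivAt t).differentiableAt) ?_
  rw [hderiv]
  intro a b hab
  have h1 : (0:ℝ) < Real.exp a + 1 := by positivity
  have h2 : Real.exp a + 1 ≤ Real.exp b + 1 := by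
    have := Real.exp_le_exp.2 hab; linarith
  have := one_div_le_one_div_of_le h1 h2
  linarith

private lemma g_antitone :
    Antitone (fun t => Real.log (1 + Real.exp (-t))) := by
  intro a b hab
  have : Real.exp (-b) ≤ Real.exp (-a) := Real.exp_le_exp.2 (neg_le_neg hab)
  exact Real.log_le_log (by positivity) (by linarith)

private lemma quadrant_convex :
    Convex ℝ {p : ℝ × ℝ | 0 < p.1 ∧ 0 < p.2} := by
  have : {p : ℝ × ℝ | 0 < p.1 ∧ 0 < p.2} = Ioi (0:ℝ) ×ˢ Ioi (0:ℝ) := by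
    ext p; simp [Set.mem_prod]
  rw [this]
  exact (convex_Ioi 0).prod (convex_Ioi 0)

private lemma sumlog_concave :
    ConcaveOn ℝ {p : ℝ × ℝ | 0 < p.1 ∧ 0 < p.2}
      (fun p : ℝ × ℝ => Real.log p.1 + Real.log p.2) := by
  have h1 : ConcaveOn ℝ {p : ℝ × ℝ | 0 < p.1 ∧ 0 < p.2}
      (fun p : ℝ × ℝ => Real.log p.1) := by
    have := strictConcaveOn_log_Ioi.concaveOn.comp_linearMap (LinearMap.fst ℝ ℝ ℝ)
    exact this.subset (fun p hp => hp.1) quadrant_convex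
  have h2 : ConcaveOn ℝ {p : ℝ × ℝ | 0 < p.1 ∧ 0 < p.2}
      (fun p : ℝ × ℝ => Real.log p.2) := by
    have := strictConcaveOn_log_Ioi.concaveOn.comp_linearMap (LinearMap.snd ℝ ℝ ℝ)
    exact this.subset (fun p hp => hp.2) quadrant_convex
  exact h1.add h2

/-- The function f(x,y) = log₂(1 + 1/(xy)) is jointly convex on the
positive quadrant {(x,y) : x > 0, y > 0}. -/
theorem logb_one_add_inv_mul_convexOn :
    ConvexOn ℝ {p : ℝ × ℝ | 0 < p.1 ∧ 0 < p.2}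
      (fun p : ℝ × ℝ => Real.logb 2 (1 + 1 / (p.1 * p.2))) := by
  set S := {p : ℝ × ℝ | 0 < p.1 ∧ 0 < p.2}
  set g : ℝ → ℝ := fun t => Real.log (1 + Real.exp (-t)) with hg
  set c : ℝ × ℝ → ℝ := fun p => Real.log p.1 + Real.log p.2 with hc
  have hcomp : ConvexOn ℝ S (fun p => g (c p)) := by
    refine ⟨quadrant_convex, fun x hx y hy a b ha hb hab => ?_⟩
    have h1 : a • c x + b • c y ≤ c (a • x + b • y) := sumlog_concave.2 hx hy ha hb hab
    calc g (c (a • x + b • y)) ≤ g (a • c x + b • c y) := g_antitone h1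
      _ ≤ a • g (c x) + b • g (c y) :=
        g_convex.2 (mem_univ _) (mem_univ _) ha hb hab
  have hsmul : ConvexOn ℝ S (fun p => (Real.log 2)⁻¹ • g (c p)) :=
    hcomp.smul (by positivity)
  refine hsmul.congr fun p hp => ?_
  have hx : (0:ℝ) < p.1 := hp.1
  have hy : (0:ℝ) < p.2 := hp.2
  have hxy : (0:ℝ) < p.1 * p.2 := mul_pos hx hy
  have hexp : Real.exp (-(Real.log p.1 + Real.log p.2)) = 1 / (p.1 * p.2) := by
    rw [Real.exp_neg, Real.exp_add, Real.exp_log hx, Real.exp_log hy, one_div]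
  simp only [hg, hc, hexp, Real.logb, smul_eq_mul, div_eq_inv_mul]
end

section
/- For x, y, x̃, ỹ > 0, the first-order Taylor lower bound holds: log₂(1 + 1/(xy)) ≥ log₂(1 + 1/(x̃ỹ)) − (x − x̃)·log₂(e)/(x̃ + x̃²ỹ) − (y − ỹ)·log₂(e)/(ỹ + ỹ²x̃). -/
/-- Tangent inequality for `s ↦ log (1 + e^s)`, stated multiplicatively:
for `a b > 0`, `log (1+b) - (b/(1+b)) * (log b - log a) ≤ log (1+a)`. -/
lemma sca_key (a b : ℝ) (ha : 0 < a) (hb : 0 < b) :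
    Real.log (1 + b) - (b / (1 + b)) * (Real.log b - Real.log a) ≤ Real.log (1 + a) := by
  have hb1 : (0:ℝ) < 1 + b := by linarith
  have hw₁ : (0:ℝ) ≤ 1 / (1 + b) := by positivity
  have hw₂ : (0:ℝ) ≤ b / (1 + b) := by positivity
  have hp₂ : (0:ℝ) < a * (1 + b) / b := by positivity
  have hw : 1 / (1 + b) + b / (1 + b) = 1 := by field_simp
  have key := Real.geom_mean_le_arith_mean2_weighted hw₁ hw₂ hb1.le hp₂.le hw
  have hsum : 1 / (1 + b) * (1 + b) + b / (1 + b) * (a * (1 + b) / b) = 1 + a := by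
    field_simp
  rw [hsum] at key
  have hlog : 1 / (1 + b) * Real.log (1 + b) + b / (1 + b) * Real.log (a * (1 + b) / b)
      ≤ Real.log (1 + a) := by
    calc 1 / (1 + b) * Real.log (1 + b) + b / (1 + b) * Real.log (a * (1 + b) / b)
        = Real.log ((1 + b) ^ (1 / (1 + b)) * (a * (1 + b) / b) ^ (b / (1 + b))) := by
          rw [Real.log_mul (by positivity) (by positivity),
            Real.log_rpow hb1, Real.log_rpow hp₂]
      _ ≤ Real.log (1 + a) := Real.log_le_log (by positivity) key
  have hlp₂ : Real.log (a * (1 + b) / b) = Real.log a + Real.log (1 + b) - Real.log b := by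
    rw [Real.log_div (by positivity) (ne_of_gt hb), Real.log_mul (ne_of_gt ha) (ne_of_gt hb1)]
  rw [hlp₂] at hlog
  have h1 : 1 / (1 + b) * Real.log (1 + b) + b / (1 + b) * Real.log (1 + b)
      = Real.log (1 + b) := by
    rw [← add_mul, hw, one_mul]
  nlinarith [hlog, h1]

/-- First-order Taylor (SCA) lower bound: for x, y, x̃, ỹ > 0,
log₂(1 + 1/(xy)) ≥ log₂(1 + 1/(x̃ỹ)) − (x−x̃)·log₂e/(x̃+x̃²ỹ) − (y−ỹ)·log₂e/(ỹ+ỹ²x̃). -/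
theorem sca_taylor_lower_bound (x y xt yt : ℝ)
    (hx : 0 < x) (hy : 0 < y) (hxt : 0 < xt) (hyt : 0 < yt) :
    Real.logb 2 (1 + 1 / (x * y)) ≥
      Real.logb 2 (1 + 1 / (xt * yt))
        - (x - xt) * Real.logb 2 (Real.exp 1) / (xt + xt ^ 2 * yt)
        - (y - yt) * Real.logb 2 (Real.exp 1) / (yt + yt ^ 2 * xt) := by
  have hlog2 : (0:ℝ) < Real.log 2 := Real.log_pos (by norm_num)
  set a : ℝ := 1 / (x * y) with hadef
  set b : ℝ := 1 / (xt * yt) with hbdef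
  have ha : 0 < a := by positivity
  have hb : 0 < b := by positivity
  have key := sca_key a b ha hb
  have h1 : Real.log (x / xt) ≤ x / xt - 1 := Real.log_le_sub_one_of_pos (by positivity)
  have h2 : Real.log (y / yt) ≤ y / yt - 1 := Real.log_le_sub_one_of_pos (by positivity)
  have hdiff : Real.log b - Real.log a ≤ (x - xt) / xt + (y - yt) / yt := by
    have hab : Real.log b - Real.log a = Real.log (x / xt) + Real.log (y / yt) := by
      rw [hadef, hbdef, Real.log_div (by norm_num) (by positivity),
        Real.log_div (by norm_num) (by positivity),
        Real.log_mul (ne_of_gt hx) (ne_of_gt hy),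
        Real.log_mul (ne_of_gt hxt) (ne_of_gt hyt),
        Real.log_div (ne_of_gt hx) (ne_of_gt hxt),
        Real.log_div (ne_of_gt hy) (ne_of_gt hyt)]
      ring
    have hx1 : x / xt - 1 = (x - xt) / xt := by field_simp
    have hy1 : y / yt - 1 = (y - yt) / yt := by field_simp
    rw [hab]; rw [hx1] at h1; rw [hy1] at h2; linarith
  have hμ : 0 < b / (1 + b) := by positivity
  have hln : Real.log (1 + b) - ((x - xt) / (xt + xt ^ 2 * yt) + (y - yt) / (yt + yt ^ 2 * xt))
      ≤ Real.log (1 + a) := by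
    have hmul := mul_le_mul_of_nonneg_left hdiff hμ.le
    have hcoef : (b / (1 + b)) * ((x - xt) / xt + (y - yt) / yt)
        = (x - xt) / (xt + xt ^ 2 * yt) + (y - yt) / (yt + yt ^ 2 * xt) := by
      rw [hbdef]
      have h1 : xt * yt ≠ 0 := by positivity
      have h2 : (1:ℝ) + xt * yt ≠ 0 := by positivity
      field_simp
      ring
    rw [hcoef] at hmul
    linarith
  rw [ge_iff_le, Real.logb, Real.logb, Real.log_exp]
  have hc1 : xt + xt ^ 2 * yt ≠ 0 := by positivity
  have hc2 : yt + yt ^ 2 * xt ≠ 0 := by positivity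
  have e : Real.log (1 + b) / Real.log 2
        - (x - xt) * (1 / Real.log 2) / (xt + xt ^ 2 * yt)
        - (y - yt) * (1 / Real.log 2) / (yt + yt ^ 2 * xt)
      = (Real.log (1 + b) - ((x - xt) / (xt + xt ^ 2 * yt) + (y - yt) / (yt + yt ^ 2 * xt)))
          / Real.log 2 := by
    field_simp
    ring
  rw [e]
  exact (div_le_div_iff_of_pos_right hlog2).mpr hln
end
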